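/- Let w₀ be as defined (w₀(r) = η₀(r) + 2r²/(1+r²) - η₀²(r)/2 + ((1-r²)/(1+r²)) ∫₁^{1+r²} (ln t)/(1-t) dt, η₀(r) = -ln(1+r²)). Then sup_{r ∈ [0,∞)} |w₀(r) - η₀(r)| < ∞. -/

import Mathlib

open MeasureTheory Real

noncomputable section

/-- The radial profile `η₀(r) = -ln(1+r²)`. -/
def eta0r (r : ℝ) : ℝ := -Real.log (1 + r^2)

/-- The radial function `w₀`. -/
def W0 (r : ℝ) : ℝ :=
  eta0r r + 2*r^2/(1+r^2) - (eta0r r)^2/2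
    + ((1-r^2)/(1+r^2)) * ∫ t in (1:ℝ)..(1+r^2), Real.log t / (1-t)

/-!
Since `1 / (1 - t) = -1 / t + 1 / (t (1 - t))`, the integral in `W0` equals
`-log² x / 2 + G x` with `x = 1 + r²` and `G x = ∫₁ˣ log t / (t (1 - t))`. The bound
`log t ≤ 2 (√t - 1)` makes the integrand of `G` of order `t^(-3/2)`, so `G` is bounded. In
`W0 - η₀` the term `-η₀² / 2 = -log² x / 2` then cancels against the `-1` part of the coefficient
`(1 - r²) / (1 + r²) = 2 / x - 1`, leaving `-log² x / x`, which is bounded because `log² x ≤ 4 x`.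
-/

open Set intervalIntegral

lemma Real.log_le_two_mul_sqrt_sub_one {t : ℝ} (ht : 0 < t) : log t ≤ 2 * (√t - 1) := by
  have := log_le_sub_one_of_pos (sqrt_pos.mpr ht)
  rw [log_sqrt ht.le] at this
  linarith

lemma Real.log_sq_le_four_mul {x : ℝ} (hx : 1 ≤ x) : log x ^ 2 ≤ 4 * x := by
  have hlog := log_le_two_mul_sqrt_sub_one (zero_lt_one.trans_le hx)
  have hsq := sq_sqrt (zero_le_one.trans hx)
  nlinarith [log_nonneg hx, sqrt_nonneg x]

lemma abs_log_div_mul_one_sub_le {t : ℝ} (ht : 1 < t) :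
    |log t / (t * (1 - t))| ≤ 2 / (t * √t) := by
  have ht0 : 0 < t := zero_lt_one.trans ht
  have hs : 1 ≤ √t := one_le_sqrt.mpr ht.le
  have hsq := sq_sqrt ht0.le
  have hlog := log_le_two_mul_sqrt_sub_one ht0
  rw [abs_div, abs_of_nonneg (log_nonneg ht.le), abs_of_neg (by nlinarith),
    div_le_div_iff₀ (by nlinarith) (by positivity)]
  -- `t - 1 = (√t - 1)(√t + 1)` absorbs the factor `√t - 1` of the logarithmic bound
  nlinarith [mul_le_mul_of_nonneg_right hlog (by positivity : 0 ≤ t * √t)]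

section PositiveEndpoints

variable {a b : ℝ}

lemma mem_uIcc_pos (ha : 0 < a) (hb : 0 < b) {t : ℝ} (ht : t ∈ uIcc a b) : 0 < t :=
  (lt_min ha hb).trans_le ht.1

lemma intervalIntegrable_two_div_mul_sqrt (ha : 0 < a) (hb : 0 < b) :
    IntervalIntegrable (fun t => 2 / (t * √t)) volume a b :=
  ContinuousOn.intervalIntegrable <| continuousOn_const.div
    (continuousOn_id.mul continuous_sqrt.continuousOn)
    fun _ ht => (mul_pos (mem_uIcc_pos ha hb ht) (sqrt_pos.mpr (mem_uIcc_pos ha hb ht))).ne'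

lemma hasDerivAt_neg_four_div_sqrt {t : ℝ} (ht : 0 < t) :
    HasDerivAt (fun s => -4 / √s) (2 / (t * √t)) t := by
  have hs : √t ≠ 0 := (sqrt_pos.mpr ht).ne'
  refine ((hasDerivAt_const t (-4 : ℝ)).div (hasDerivAt_sqrt ht.ne') hs).congr_deriv ?_
  rw [sq_sqrt ht.le]
  field_simp
  ring

lemma integral_two_div_mul_sqrt (ha : 0 < a) (hb : 0 < b) :
    ∫ t in a..b, 2 / (t * √t) = 4 / √a - 4 / √b := by
  rw [integral_eq_sub_of_hasDerivAt
    (fun t ht => hasDerivAt_neg_four_div_sqrt (mem_uIcc_pos ha hb ht))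
    (intervalIntegrable_two_div_mul_sqrt ha hb)]
  ring

lemma intervalIntegrable_log_div_self (ha : 0 < a) (hb : 0 < b) :
    IntervalIntegrable (fun t => log t / t) volume a b :=
  ContinuousOn.intervalIntegrable fun _ ht =>
    have ht0 := (mem_uIcc_pos ha hb ht).ne'
    ((continuousAt_log ht0).div continuousAt_id ht0).continuousWithinAt

lemma integral_log_div_self (ha : 0 < a) (hb : 0 < b) :
    ∫ t in a..b, log t / t = log b ^ 2 / 2 - log a ^ 2 / 2 := by
  refine integral_eq_sub_of_hasDerivAt (f := fun s => log s ^ 2 / 2) (fun t ht => ?_)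
    (intervalIntegrable_log_div_self ha hb)
  have ht0 := (mem_uIcc_pos ha hb ht).ne'
  refine (((hasDerivAt_log ht0).pow 2).div_const 2).congr_deriv ?_
  field_simp
  ring

end PositiveEndpoints

lemma intervalIntegrable_log_div_mul_one_sub {x : ℝ} (hx : 1 ≤ x) :
    IntervalIntegrable (fun t => log t / (t * (1 - t))) volume 1 x := by
  refine (intervalIntegrable_two_div_mul_sqrt one_pos (by linarith)).mono_fun' ?_ ?_
  · exact (measurable_log.div (measurable_id.mul (measurable_const.sub measurable_id)))
      |>.aestronglyMeasurable
  · rw [uIoc_of_le hx]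
    filter_upwards [ae_restrict_mem measurableSet_Ioc] with t ht
    exact abs_log_div_mul_one_sub_le ht.1

lemma abs_integral_log_div_mul_one_sub_le {x : ℝ} (hx : 1 ≤ x) :
    |∫ t in (1 : ℝ)..x, log t / (t * (1 - t))| ≤ 4 := by
  have hx0 : 0 < x := by linarith
  have hbound := norm_integral_le_abs_of_norm_le (f := fun t => log t / (t * (1 - t)))
    (by
      rw [uIoc_of_le hx]
      filter_upwards [ae_restrict_mem measurableSet_Ioc] with t ht
      exact abs_log_div_mul_one_sub_le ht.1)
    (intervalIntegrable_two_div_mul_sqrt one_pos hx0)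
  rw [integral_two_div_mul_sqrt one_pos hx0, sqrt_one, div_one] at hbound
  have hle : 4 / √x ≤ 4 := div_le_self (by norm_num) (one_le_sqrt.mpr hx)
  rw [Real.norm_eq_abs, abs_of_nonneg (sub_nonneg.mpr hle)] at hbound
  linarith [show 0 < 4 / √x by positivity]

lemma integral_log_div_one_sub {x : ℝ} (hx : 1 ≤ x) :
    ∫ t in (1 : ℝ)..x, log t / (1 - t)
      = -(log x ^ 2 / 2) + ∫ t in (1 : ℝ)..x, log t / (t * (1 - t)) := by
  have hx0 : 0 < x := by linarith
  have hsplit : ∀ t ∈ uIcc 1 x,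
      log t / (1 - t) = -(log t / t) + log t / (t * (1 - t)) := by
    intro t ht
    have ht0 := (mem_uIcc_pos one_pos hx0 ht).ne'
    rcases eq_or_ne t 1 with rfl | ht1
    · simp
    · have : 1 - t ≠ 0 := sub_ne_zero.mpr (Ne.symm ht1)
      field_simp
      ring
  rw [integral_congr hsplit, integral_add (f := fun t => -(log t / t))
    (intervalIntegrable_log_div_self one_pos hx0).neg (intervalIntegrable_log_div_mul_one_sub hx),
    intervalIntegral.integral_neg,
    integral_log_div_self one_pos hx0, log_one]
  ring

lemma W0_sub_eta0r (r : ℝ) :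
    W0 r - eta0r r = 2 * r ^ 2 / (1 + r ^ 2) - log (1 + r ^ 2) ^ 2 / (1 + r ^ 2)
      + (1 - r ^ 2) / (1 + r ^ 2) * ∫ t in (1 : ℝ)..(1 + r ^ 2), log t / (t * (1 - t)) := by
  have hx : 1 ≤ 1 + r ^ 2 := le_add_of_nonneg_right (sq_nonneg r)
  rw [W0, eta0r, integral_log_div_one_sub hx]
  field_simp
  ring

theorem stmt4 :
    ∃ C : ℝ, ∀ r : ℝ, 0 ≤ r → |W0 r - eta0r r| ≤ C := by
  refine ⟨10, fun r _ => ?_⟩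
  rw [W0_sub_eta0r]
  set x := 1 + r ^ 2
  have hx : 1 ≤ x := le_add_of_nonneg_right (sq_nonneg r)
  have hx0 : 0 < x := by linarith
  have hquot : |2 * r ^ 2 / x| ≤ 2 := by
    rw [abs_of_nonneg (by positivity), div_le_iff₀ hx0]
    linarith
  have hlog : |log x ^ 2 / x| ≤ 4 := by
    rw [abs_of_nonneg (by positivity), div_le_iff₀ hx0]
    exact log_sq_le_four_mul hx
  have hcoeff : |(1 - r ^ 2) / x| ≤ 1 := by
    rw [abs_div, abs_of_pos hx0, div_le_one hx0, abs_le]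
    constructor <;> nlinarith
  have hint := abs_integral_log_div_mul_one_sub_le hx
  calc _ ≤ |2 * r ^ 2 / x| + |log x ^ 2 / x|
        + |(1 - r ^ 2) / x| * |∫ t in (1 : ℝ)..x, log t / (t * (1 - t))| := by
        rw [← abs_mul]
        exact (abs_add_le _ _).trans (add_le_add_left (abs_sub _ _) _)
    _ ≤ 2 + 4 + 1 * 4 := by gcongr
    _ = 10 := by norm_num
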